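/- The composite δ*δ_! : sSet → sSet, where δ_! is the left adjoint of the diagonal functor δ* on bisimplicial sets, preserves monomorphisms of simplicial sets. -/

import Mathlib

/-!
An `a`-simplex of `δ*δ_! X` is represented by a triple `(f, g, x)` with `f g : [a] ⟶ [b]` and
`x ∈ X_b`, modulo `(f ≫ φ, g ≫ φ, x) ∼ (f, g, φ^* x)`. Restricting `x` to the joint image of
`f` and `g` and then taking the Eilenberg–Zilber decomposition of the result turns a triple into
a normal form `(f', g', y)` with `f', g'` jointly surjective and `y` nondegenerate. The normal form
is unique and invariant under the relation, so two triples are identified iff their normal forms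
agree. A monomorphism `X ⟶ Y` preserves nondegenerate simplices, hence maps normal forms to
normal forms injectively, and so it stays injective on `δ*δ_!`.
-/

open CategoryTheory

noncomputable section

namespace Paper

/-- The diagonal of the simplex category; restriction along it is the diagonal functor
`δ* : bisSet ⥤ sSet`, and its left Kan extension along it is `δ_! : sSet ⥤ bisSet`. -/
abbrev simplexDiag : SimplexCategoryᵒᵖ ⥤ SimplexCategoryᵒᵖ × SimplexCategoryᵒᵖ :=
  Functor.diag SimplexCategoryᵒᵖ

end Paper

namespace SimplexCategory

open Simplicial

variable {a b c : SimplexCategory}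

def JointlySurjective (f g : a ⟶ b) : Prop :=
  Set.range f.toOrderHom ∪ Set.range g.toOrderHom = Set.univ

lemma JointlySurjective.range_comp_union_range_comp {f g : a ⟶ b} (h : JointlySurjective f g)
    (m : b ⟶ c) :
    Set.range (f ≫ m).toOrderHom ∪ Set.range (g ≫ m).toOrderHom = Set.range m.toOrderHom := by
  change Set.range (m.toOrderHom ∘ f.toOrderHom) ∪ Set.range (m.toOrderHom ∘ g.toOrderHom) = _
  rw [Set.range_comp, Set.range_comp, ← Set.image_union, h, Set.image_univ]

lemma JointlySurjective.comp_epi {f g : a ⟶ b} (h : JointlySurjective f g) (e : b ⟶ c) [Epi e] :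
    JointlySurjective (f ≫ e) (g ≫ e) := by
  rw [JointlySurjective, h.range_comp_union_range_comp, Set.range_eq_univ]
  exact epi_iff_surjective.1 ‹_›

lemma exists_jointlySurjective_comp_mono (f g : a ⟶ b) :
    ∃ (c : ℕ) (f₁ g₁ : a ⟶ ⦋c⦌) (m : ⦋c⦌ ⟶ b),
      Mono m ∧ JointlySurjective f₁ g₁ ∧ f₁ ≫ m = f ∧ g₁ ≫ m = g := by
  induction b using SimplexCategory.rec with | _ n
  induction n with
  | zero =>
    refine ⟨0, f, g, 𝟙 _, inferInstance, ?_, by simp, by simp⟩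
    exact Set.eq_univ_of_forall fun j => Or.inl ⟨0, Subsingleton.elim (α := Fin 1) _ _⟩
  | succ n ih =>
    by_cases h : JointlySurjective f g
    · exact ⟨n + 1, f, g, 𝟙 _, inferInstance, h, by simp, by simp⟩
    obtain ⟨j, hj⟩ := (Set.ne_univ_iff_exists_notMem _).1 h
    simp only [Set.mem_union, Set.mem_range, not_or, not_exists] at hj
    obtain ⟨f', rfl⟩ := eq_comp_δ_of_not_surjective' f j hj.1
    obtain ⟨g', rfl⟩ := eq_comp_δ_of_not_surjective' g j hj.2
    obtain ⟨c, f₁, g₁, m, _, hfg, rfl, rfl⟩ := ih f' g'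
    exact ⟨c, f₁, g₁, m ≫ δ j, inferInstance, hfg, by simp, by simp⟩

lemma len_eq_of_range_eq {c' : SimplexCategory} (m : c ⟶ b) (m' : c' ⟶ b) [Mono m] [Mono m']
    (h : Set.range m.toOrderHom = Set.range m'.toOrderHom) : c.len = c'.len := by
  have hcard := Nat.card_range_of_injective (mono_iff_injective.1 ‹Mono m›)
  rw [h, Nat.card_range_of_injective (mono_iff_injective.1 ‹Mono m'›)] at hcard
  simpa using hcard.symm

lemma eq_of_range_eq (m m' : a ⟶ b) [Mono m] [Mono m']
    (h : Set.range m.toOrderHom = Set.range m'.toOrderHom) : m = m' := by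
  ext : 2
  exact (m.toOrderHom.monotone.strictMono_of_injective (mono_iff_injective.1 ‹_›)).range_inj
    (m'.toOrderHom.monotone.strictMono_of_injective (mono_iff_injective.1 ‹_›)) |>.1 h

end SimplexCategory

namespace CategoryTheory.Functor

open Limits

variable {C D H : Type*} [Category C] [Category D] [Category H] (L : C ⥤ D)
  [∀ F : C ⥤ H, L.HasPointwiseLeftKanExtension F]

/-- `leftKanExtensionObjIsoColimit`, typed so that it composes syntactically with
`(L.lan.map u).app Y`. -/
def lanObjObjIsoColimit (F : C ⥤ H) (Y : D) :
    (L.lan.obj F).obj Y ≅ colimit (CostructuredArrow.proj L Y ⋙ F) :=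
  L.leftKanExtensionObjIsoColimit F Y

lemma ι_lanObjObjIsoColimit_inv (F : C ⥤ H) (Y : D) (j : CostructuredArrow L Y) :
    colimit.ι _ j ≫ (L.lanObjObjIsoColimit F Y).inv =
      (L.lanUnit.app F).app j.left ≫ (L.lan.obj F).map j.hom :=
  L.ι_leftKanExtensionObjIsoColimit_inv F Y j

lemma lan_map_app {F G : C ⥤ H} (u : F ⟶ G) (Y : D) :
    (L.lan.map u).app Y = (L.lanObjObjIsoColimit F Y).hom ≫
      colimMap (whiskerLeft (CostructuredArrow.proj L Y) u) ≫ (L.lanObjObjIsoColimit G Y).inv := by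
  rw [← Iso.inv_comp_eq]
  ext j
  have hunit : u.app j.left ≫ (L.lanUnit.app G).app j.left =
      (L.lanUnit.app F).app j.left ≫ (L.lan.map u).app (L.obj j.left) :=
    congr_app (L.lanUnit.naturality u) j.left
  rw [ι_colimMap_assoc, ← Category.assoc, ι_lanObjObjIsoColimit_inv, ι_lanObjObjIsoColimit_inv]
  calc _ = (L.lanUnit.app F).app j.left ≫ (L.lan.obj F).map j.hom ≫ (L.lan.map u).app Y :=
        Category.assoc _ _ _
    _ = ((L.lanUnit.app F).app j.left ≫ (L.lan.map u).app (L.obj j.left)) ≫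
        (L.lan.obj G).map j.hom := by rw [NatTrans.naturality, Category.assoc]
    _ = u.app j.left ≫ (L.lanUnit.app G).app j.left ≫ (L.lan.obj G).map j.hom := by
        rw [← hunit, Category.assoc]

end CategoryTheory.Functor

namespace Paper

open Limits Opposite Simplicial SimplexCategory

abbrev lanDiagram (X : SSet) (a : SimplexCategory) :
    CostructuredArrow simplexDiag (op a, op a) ⥤ Type :=
  CostructuredArrow.proj simplexDiag (op a, op a) ⋙ X

variable {X : SSet} {a b b' : SimplexCategory}

abbrev lanIndex (f g : a ⟶ b) : CostructuredArrow simplexDiag (op a, op a) :=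
  CostructuredArrow.mk (Y := op b) ((f.op, g.op) : simplexDiag.obj (op b) ⟶ (op a, op a))

lemma ι_lanIndex_comp (φ : b' ⟶ b) (f g : a ⟶ b') (x : X.obj (op b)) :
    colimit.ι (lanDiagram X a) (lanIndex (f ≫ φ) (g ≫ φ)) x =
      colimit.ι (lanDiagram X a) (lanIndex f g) (X.map φ.op x) :=
  Types.colimit_sound (CostructuredArrow.homMk φ.op rfl) rfl

/-- Here `m` includes the joint image of `f` and `g`, and `X.map m.op x = X.map e.op y` is the
Eilenberg–Zilber decomposition of the restricted simplex. -/
def IsNormalForm (f g : a ⟶ b) (x : X.obj (op b)) (n : Σ j, (lanDiagram X a).obj j) : Prop :=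
  ∃ (c p : ℕ) (f₁ g₁ : a ⟶ ⦋c⦌) (m : ⦋c⦌ ⟶ b) (e : ⦋c⦌ ⟶ ⦋p⦌) (y : X.nonDegenerate p),
    Mono m ∧ Epi e ∧ JointlySurjective f₁ g₁ ∧ f₁ ≫ m = f ∧ g₁ ≫ m = g ∧
      X.map m.op x = X.map e.op y ∧ n = ⟨lanIndex (f₁ ≫ e) (g₁ ≫ e), y.1⟩

lemma exists_isNormalForm (f g : a ⟶ b) (x : X.obj (op b)) : ∃ n, IsNormalForm f g x n := by
  obtain ⟨c, f₁, g₁, m, _, hfg, hf, hg⟩ := exists_jointlySurjective_comp_mono f g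
  obtain ⟨p, e, _, y, hy⟩ := X.exists_nonDegenerate (X.map m.op x)
  exact ⟨_, c, p, f₁, g₁, m, e, y, ‹_›, ‹_›, hfg, hf, hg, hy, rfl⟩

lemma IsNormalForm.unique {f g : a ⟶ b} {x : X.obj (op b)} {n n' : Σ j, (lanDiagram X a).obj j}
    (h : IsNormalForm f g x n) (h' : IsNormalForm f g x n') : n = n' := by
  obtain ⟨c, p, f₁, g₁, m, e, y, _, _, hfg, rfl, rfl, hy, rfl⟩ := h
  obtain ⟨c', p', f₁', g₁', m', e', y', _, _, hfg', hf, hg, hy', rfl⟩ := h'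
  have hm : Set.range m.toOrderHom = Set.range m'.toOrderHom := by
    rw [← hfg.range_comp_union_range_comp, ← hfg'.range_comp_union_range_comp, hf, hg]
  obtain rfl : c = c' := len_eq_of_range_eq m m' hm
  obtain rfl := eq_of_range_eq m m' hm
  obtain rfl := (cancel_mono m).1 hf
  obtain rfl := (cancel_mono m).1 hg
  obtain rfl := X.unique_nonDegenerate_dim _ e y hy e' y' hy'
  obtain rfl := X.unique_nonDegenerate_simplex _ e y hy e' y' hy'
  obtain rfl := X.unique_nonDegenerate_map _ e y hy e' y hy'
  rfl

lemma IsNormalForm.of_comp {φ : b' ⟶ b} {f g : a ⟶ b'} {x : X.obj (op b)}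
    {n : Σ j, (lanDiagram X a).obj j} (h : IsNormalForm f g (X.map φ.op x) n) :
    IsNormalForm (f ≫ φ) (g ≫ φ) x n := by
  obtain ⟨c, p, f₁, g₁, m, e, y, _, _, hfg, rfl, rfl, hy, rfl⟩ := h
  -- The joint image of `f₁ ≫ m ≫ φ` and `g₁ ≫ m ≫ φ` is the image of `m ≫ φ`.
  obtain ⟨p', e', _, y', hy'⟩ := X.exists_nonDegenerate (X.map (image.ι (m ≫ φ)).op x)
  have he : X.map e.op y = X.map (factorThruImage (m ≫ φ) ≫ e').op y' := by
    rw [← hy, ← Functor.map_comp_apply, ← op_comp]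
    conv_lhs => rw [← image.fac (m ≫ φ), op_comp, Functor.map_comp_apply, hy']
    rw [← Functor.map_comp_apply, ← op_comp]
  obtain rfl := X.unique_nonDegenerate_dim _ e y rfl _ y' he
  obtain rfl := X.unique_nonDegenerate_simplex _ e y rfl _ y' he
  obtain rfl := X.unique_nonDegenerate_map _ e y rfl _ y he
  refine ⟨_, p, f₁ ≫ factorThruImage (m ≫ φ), g₁ ≫ factorThruImage (m ≫ φ), image.ι (m ≫ φ), e',
    y, inferInstance, inferInstance, hfg.comp_epi _, ?_, ?_, hy', ?_⟩
  · simp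
  · simp
  · rw [Category.assoc, Category.assoc]

lemma isNormalForm_comp_iff (φ : b' ⟶ b) (f g : a ⟶ b') (x : X.obj (op b))
    (n : Σ j, (lanDiagram X a).obj j) :
    IsNormalForm (f ≫ φ) (g ≫ φ) x n ↔ IsNormalForm f g (X.map φ.op x) n := by
  refine ⟨fun h => ?_, IsNormalForm.of_comp⟩
  obtain ⟨n', hn'⟩ := exists_isNormalForm f g (X.map φ.op x)
  rwa [h.unique hn'.of_comp]

lemma IsNormalForm.map {Y : SSet} (u : X ⟶ Y) [Mono u] {f g : a ⟶ b} {x : X.obj (op b)}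
    {n : Σ j, (lanDiagram X a).obj j} (h : IsNormalForm f g x n) :
    IsNormalForm f g (u.app _ x) ⟨n.1, u.app _ n.2⟩ := by
  obtain ⟨c, p, f₁, g₁, m, e, y, hm, he, hfg, hf, hg, hy, rfl⟩ := h
  refine ⟨c, p, f₁, g₁, m, e, ⟨u.app _ y, (SSet.nonDegenerate_iff_of_mono u _).2 y.2⟩, hm, he, hfg,
    hf, hg, ?_, rfl⟩
  rw [← NatTrans.naturality_apply, hy, NatTrans.naturality_apply]

lemma IsNormalForm.ι_eq {f g : a ⟶ b} {x : X.obj (op b)} {n : Σ j, (lanDiagram X a).obj j}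
    (h : IsNormalForm f g x n) :
    colimit.ι (lanDiagram X a) (lanIndex f g) x = colimit.ι (lanDiagram X a) n.1 n.2 := by
  obtain ⟨c, p, f₁, g₁, m, e, y, _, _, _, rfl, rfl, hy, rfl⟩ := h
  rw [ι_lanIndex_comp, hy, ← ι_lanIndex_comp]

lemma isNormalForm_iff_of_eqvGen {s t : Σ j, (lanDiagram X a).obj j}
    (h : Relation.EqvGen (lanDiagram X a).ColimitTypeRel s t) (n : Σ j, (lanDiagram X a).obj j) :
    IsNormalForm s.1.hom.1.unop s.1.hom.2.unop s.2 n ↔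
      IsNormalForm t.1.hom.1.unop t.1.hom.2.unop t.2 n := by
  induction h with
  | rel s t hst =>
    obtain ⟨φ, ht⟩ := hst
    have hf : s.1.hom.1.unop = t.1.hom.1.unop ≫ φ.left.unop := by
      simpa using (congrArg (fun k => k.1.unop) φ.w).symm
    have hg : s.1.hom.2.unop = t.1.hom.2.unop ≫ φ.left.unop := by
      simpa using (congrArg (fun k => k.2.unop) φ.w).symm
    rw [hf, hg, ht]
    exact isNormalForm_comp_iff _ _ _ _ _
  | refl => rfl
  | symm _ _ _ ih => exact ih.symm
  | trans _ _ _ _ _ ih₁ ih₂ => exact ih₁.trans ih₂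

lemma injective_colimMap_lanDiagram {Y : SSet} (u : X ⟶ Y) [Mono u] :
    Function.Injective
      (colimMap (Functor.whiskerLeft (CostructuredArrow.proj simplexDiag (op a, op a)) u)) := by
  intro w w' hw
  obtain ⟨j, x, rfl⟩ := Types.jointly_surjective' w
  obtain ⟨j', x', rfl⟩ := Types.jointly_surjective' w'
  simp only [← ConcreteCategory.comp_apply, ι_colimMap] at hw
  obtain ⟨⟨k, y⟩, hn⟩ := exists_isNormalForm j.hom.1.unop j.hom.2.unop x
  obtain ⟨⟨k', y'⟩, hn'⟩ := exists_isNormalForm j'.hom.1.unop j'.hom.2.unop x'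
  have hu := ((isNormalForm_iff_of_eqvGen (Types.colimit_eq hw) _).1 (hn.map u)).unique (hn'.map u)
  obtain ⟨rfl, hy⟩ := Sigma.mk.inj_iff.1 hu
  obtain rfl := (mono_iff_injective (u.app k.left)).1 inferInstance (eq_of_heq hy)
  exact hn.ι_eq.trans hn'.ι_eq.symm

/-- The composite `δ*δ_! : sSet ⥤ sSet` preserves monomorphisms of simplicial sets. -/
theorem diag_lan_comp_restriction_preservesMonomorphisms :
    (simplexDiag.lan ⋙
      (Functor.whiskeringLeft SimplexCategoryᵒᵖ (SimplexCategoryᵒᵖ × SimplexCategoryᵒᵖ)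
        (Type)).obj simplexDiag : SSet ⥤ SSet).PreservesMonomorphisms := by
  refine ⟨fun {X Y} u _ => (NatTrans.mono_iff_mono_app _).2 fun ⟨a⟩ => ?_⟩
  have : Mono (colimMap
      (Functor.whiskerLeft (CostructuredArrow.proj simplexDiag (op a, op a)) u)) :=
    (mono_iff_injective _).2 (injective_colimMap_lanDiagram u)
  change Mono ((simplexDiag.lan.map u).app (op a, op a))
  rw [Functor.lan_map_app]
  infer_instance

end Paper
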